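/- (Section 4.1: generalized polar coordinates.) The map η is a bijection from {z ∈ ℂⁿ : zⁿ ≠ 0} onto ℂ^{n−1} × (ℂ∖{0}), with inverse η⁻¹(w,ζ) = (ζ/√(N(w)))·(w¹, …, w^{n−1}, 1); moreover ‖η⁻¹(w,ζ)‖ = |ζ| for all (w,ζ) ∈ ℂ^{n−1} × (ℂ∖{0}), and both η and η⁻¹ are of class C^∞ in the real sense on their open domains, so η is a real diffeomorphism onto ℂ^{n−1} × (ℂ∖{0}). -/

import Mathlib

noncomputable section

/-- The Euclidean norm `‖z‖ = (Σ_i |zⁱ|²)^{1/2}` on `ℂ^k`. -/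
def cnorm {k : ℕ} (z : Fin k → ℂ) : ℝ := Real.sqrt (∑ i, Complex.normSq (z i))

/-- `N(w) = 1 + Σ_γ |w^γ|²`. -/
def Nfun {m : ℕ} (w : Fin m → ℂ) : ℝ := 1 + ∑ γ, Complex.normSq (w γ)

/-- The generalized polar coordinate map
`η(z) = (z¹/zⁿ, …, z^{n−1}/zⁿ, ‖z‖·zⁿ/|zⁿ|)`, with `n = m + 1`. -/
def eta {m : ℕ} (z : Fin (m + 1) → ℂ) : (Fin m → ℂ) × ℂ :=
  (fun α => z α.castSucc / z (Fin.last m),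
    (cnorm z : ℂ) * z (Fin.last m) / ((‖z (Fin.last m)‖ : ℝ) : ℂ))

/-- The inverse map `η⁻¹(w,ζ) = (ζ/√N(w))·(w¹, …, w^{n−1}, 1)`. -/
def etaInv {m : ℕ} (p : (Fin m → ℂ) × ℂ) : Fin (m + 1) → ℂ :=
  fun i => (p.2 / (Real.sqrt (Nfun p.1) : ℂ))
    * Fin.lastCases (motive := fun _ => ℂ) 1 (fun α => p.1 α) i

/-!
Factoring `z = zⁿ · (w, 1)` with `w = η(z)₁` gives `‖z‖ = |zⁿ| · √N(w)`, so the last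
component of `η` is `ζ = √N(w) · zⁿ` and `zⁿ = ζ / √N(w)` recovers `z`; conversely
`‖η⁻¹(w, ζ)‖² = |ζ|² N(w) / N(w)`.
Smoothness holds because `N ≥ 1` and the Euclidean norm is smooth away from `0`.
-/

open Complex hiding eta

lemma sum_normSq_nonneg {ι : Type*} [Fintype ι] (z : ι → ℂ) : 0 ≤ ∑ i, normSq (z i) :=
  Finset.sum_nonneg fun i _ => normSq_nonneg (z i)

lemma sum_normSq_pos {ι : Type*} [Fintype ι] {z : ι → ℂ} {i : ι} (hi : z i ≠ 0) :
    0 < ∑ j, normSq (z j) :=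
  (normSq_pos.2 hi).trans_le <|
    Finset.single_le_sum (fun j _ => normSq_nonneg (z j)) (Finset.mem_univ i)

lemma cnorm_eq_norm {k : ℕ} (z : Fin k → ℂ) :
    cnorm z = ‖(EuclideanSpace.equiv (Fin k) ℂ).symm z‖ := by
  simp [cnorm, EuclideanSpace.norm_eq, normSq_eq_norm_sq]

lemma cnorm_pos {k : ℕ} {z : Fin k → ℂ} {i : Fin k} (hi : z i ≠ 0) : 0 < cnorm z :=
  Real.sqrt_pos.2 (sum_normSq_pos hi)

lemma Nfun_pos {m : ℕ} (w : Fin m → ℂ) : 0 < Nfun w :=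
  add_pos_of_pos_of_nonneg one_pos (sum_normSq_nonneg w)

lemma sqrt_Nfun_pos {m : ℕ} (w : Fin m → ℂ) : 0 < √(Nfun w) :=
  Real.sqrt_pos.2 (Nfun_pos w)

lemma ofReal_sqrt_Nfun_ne_zero {m : ℕ} (w : Fin m → ℂ) : (√(Nfun w) : ℂ) ≠ 0 :=
  ofReal_ne_zero.2 (sqrt_Nfun_pos w).ne'

section Algebra

variable {m : ℕ}

lemma Nfun_eta_fst {z : Fin (m + 1) → ℂ} (h : z (Fin.last m) ≠ 0) :
    Nfun (eta z).1 = (∑ i, normSq (z i)) / normSq (z (Fin.last m)) := by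
  have h0 : normSq (z (Fin.last m)) ≠ 0 := (normSq_pos.2 h).ne'
  simp only [Nfun, eta, normSq_div]
  rw [← Finset.sum_div, Fin.sum_univ_castSucc]
  field_simp
  ring

lemma sqrt_Nfun_eta_fst {z : Fin (m + 1) → ℂ} (h : z (Fin.last m) ≠ 0) :
    √(Nfun (eta z).1) = cnorm z / ‖z (Fin.last m)‖ := by
  rw [Nfun_eta_fst h, Real.sqrt_div (sum_normSq_nonneg z), cnorm, norm_def]

lemma eta_snd_div_sqrt_Nfun {z : Fin (m + 1) → ℂ} (h : z (Fin.last m) ≠ 0) :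
    (eta z).2 / (√(Nfun (eta z).1) : ℂ) = z (Fin.last m) := by
  have hc : (cnorm z : ℂ) ≠ 0 := ofReal_ne_zero.2 (cnorm_pos h).ne'
  have hl : ((‖z (Fin.last m)‖ : ℝ) : ℂ) ≠ 0 := ofReal_ne_zero.2 (norm_ne_zero_iff.2 h)
  rw [sqrt_Nfun_eta_fst h]
  simp only [eta]
  push_cast
  field_simp

lemma etaInv_eta {z : Fin (m + 1) → ℂ} (h : z (Fin.last m) ≠ 0) : etaInv (eta z) = z := by
  funext i
  induction i using Fin.lastCases with
  | last => simp [etaInv, eta_snd_div_sqrt_Nfun h]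
  | cast α =>
    simp only [etaInv, Fin.lastCases_castSucc, eta_snd_div_sqrt_Nfun h]
    simp only [eta]
    field_simp

lemma etaInv_last (p : (Fin m → ℂ) × ℂ) :
    etaInv p (Fin.last m) = p.2 / (√(Nfun p.1) : ℂ) := by
  simp [etaInv]

lemma etaInv_castSucc (p : (Fin m → ℂ) × ℂ) (α : Fin m) :
    etaInv p α.castSucc = p.2 / (√(Nfun p.1) : ℂ) * p.1 α := by
  simp [etaInv]

lemma sum_normSq_etaInv (p : (Fin m → ℂ) × ℂ) :
    ∑ i, normSq (etaInv p i) = normSq p.2 := by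
  have hN : √(Nfun p.1) * √(Nfun p.1) = Nfun p.1 := Real.mul_self_sqrt (Nfun_pos p.1).le
  have hN0 := (Nfun_pos p.1).ne'
  simp only [Fin.sum_univ_castSucc, etaInv_castSucc, etaInv_last, normSq_mul, normSq_div,
    normSq_ofReal, hN, ← Finset.mul_sum]
  field_simp
  rw [Nfun]
  ring

lemma cnorm_etaInv (p : (Fin m → ℂ) × ℂ) : cnorm (etaInv p) = ‖p.2‖ := by
  rw [cnorm, sum_normSq_etaInv, ← norm_def]

lemma etaInv_last_ne_zero {p : (Fin m → ℂ) × ℂ} (h : p.2 ≠ 0) : etaInv p (Fin.last m) ≠ 0 := by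
  rw [etaInv_last]
  exact div_ne_zero h (ofReal_sqrt_Nfun_ne_zero p.1)

lemma eta_snd_ne_zero {z : Fin (m + 1) → ℂ} (h : z (Fin.last m) ≠ 0) : (eta z).2 ≠ 0 :=
  div_ne_zero (mul_ne_zero (ofReal_ne_zero.2 (cnorm_pos h).ne') h)
    (ofReal_ne_zero.2 (norm_ne_zero_iff.2 h))

lemma eta_etaInv {p : (Fin m → ℂ) × ℂ} (h : p.2 ≠ 0) : eta (etaInv p) = p := by
  have hS := ofReal_sqrt_Nfun_ne_zero p.1
  have hp : ((‖p.2‖ : ℝ) : ℂ) ≠ 0 := ofReal_ne_zero.2 (norm_ne_zero_iff.2 h)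
  ext1
  · funext α
    simp only [eta, etaInv_castSucc, etaInv_last]
    field_simp
  · simp only [eta, cnorm_etaInv, etaInv_last, norm_div, norm_real,
      Real.norm_of_nonneg (sqrt_Nfun_pos p.1).le]
    push_cast
    field_simp

lemma invOn_etaInv_eta :
    Set.InvOn etaInv eta {z : Fin (m + 1) → ℂ | z (Fin.last m) ≠ 0}
      {p : (Fin m → ℂ) × ℂ | p.2 ≠ 0} :=
  ⟨fun _ hz => etaInv_eta hz, fun _ hp => eta_etaInv hp⟩

end Algebra

section Smoothness

variable {n : WithTop ℕ∞}

lemma contDiffAt_cnorm {k : ℕ} {z : Fin k → ℂ} (hz : z ≠ 0) : ContDiffAt ℝ n cnorm z := by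
  have he : ContDiff ℝ n (EuclideanSpace.equiv (Fin k) ℂ).symm :=
    (EuclideanSpace.equiv (Fin k) ℂ).symm.contDiff.restrict_scalars ℝ
  rw [funext cnorm_eq_norm]
  exact (contDiffAt_norm ℂ (by simpa using hz)).comp z he.contDiffAt

lemma contDiff_Nfun {m : ℕ} : ContDiff ℝ n (Nfun (m := m)) := by
  have hnormSq : ContDiff ℝ n normSq := by
    simpa only [Complex.sq_norm] using contDiff_norm_sq ℝ (E := ℂ)
  exact contDiff_const.add <| ContDiff.sum fun γ _ => hnormSq.comp (contDiff_apply ℝ ℂ γ)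

lemma contDiffOn_eta {m : ℕ} :
    ContDiffOn ℝ n eta {z : Fin (m + 1) → ℂ | z (Fin.last m) ≠ 0} := by
  have hlast : ContDiff ℝ n fun z : Fin (m + 1) → ℂ => z (Fin.last m) := contDiff_apply ℝ ℂ _
  refine ContDiffOn.prodMk ?_ fun z hz => ?_
  · refine contDiffOn_pi.2 fun α => ?_
    exact ((contDiff_apply ℂ ℂ α.castSucc).contDiffOn.div
      (contDiff_apply ℂ ℂ (Fin.last m)).contDiffOn fun z hz => hz).restrict_scalars ℝ
  · have hcnorm : ContDiffAt ℝ n (fun z : Fin (m + 1) → ℂ => (cnorm z : ℂ)) z :=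
      ofRealCLM.contDiff.contDiffAt.comp z
        (contDiffAt_cnorm fun h0 => hz (congrFun h0 (Fin.last m)))
    have habs : ContDiffAt ℝ n (fun z : Fin (m + 1) → ℂ => ((‖z (Fin.last m)‖ : ℝ) : ℂ)) z :=
      ofRealCLM.contDiff.contDiffAt.comp z (hlast.contDiffAt.norm ℂ hz)
    simpa only [eta, div_eq_mul_inv, Pi.inv_apply] using
      ((hcnorm.mul hlast.contDiffAt).mul (habs.inv (by simpa using hz))).contDiffWithinAt

lemma contDiff_lastCases_one {m : ℕ} (i : Fin (m + 1)) :
    ContDiff ℝ n fun w : Fin m → ℂ => Fin.lastCases (motive := fun _ => ℂ) 1 (fun α => w α) i := by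
  induction i using Fin.lastCases with
  | last => simpa using contDiff_const
  | cast α => simpa using contDiff_apply ℝ ℂ α

lemma contDiff_etaInv {m : ℕ} : ContDiff ℝ n (etaInv (m := m)) := by
  have hsqrt : ContDiff ℝ n fun p : (Fin m → ℂ) × ℂ => ((√(Nfun p.1) : ℝ) : ℂ) :=
    ofRealCLM.contDiff.comp <|
      (contDiff_Nfun.comp contDiff_fst).sqrt fun p => (Nfun_pos p.1).ne'
  refine contDiff_pi.2 fun i => ?_
  simpa only [etaInv, div_eq_mul_inv, Pi.inv_apply, Function.comp_apply] using
    (contDiff_snd.mul (hsqrt.inv fun p => ofReal_sqrt_Nfun_ne_zero p.1)).mul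
      ((contDiff_lastCases_one i).comp contDiff_fst)

end Smoothness

theorem statement8_general (m : ℕ) :
    Set.BijOn eta {z : Fin (m + 1) → ℂ | z (Fin.last m) ≠ 0}
      {p : (Fin m → ℂ) × ℂ | p.2 ≠ 0}
    ∧ Set.InvOn etaInv eta {z : Fin (m + 1) → ℂ | z (Fin.last m) ≠ 0}
      {p : (Fin m → ℂ) × ℂ | p.2 ≠ 0}
    ∧ (∀ p : (Fin m → ℂ) × ℂ, p.2 ≠ 0 → cnorm (etaInv p) = ‖p.2‖)
    ∧ ContDiffOn ℝ (⊤ : ℕ∞) eta {z : Fin (m + 1) → ℂ | z (Fin.last m) ≠ 0}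
    ∧ ContDiffOn ℝ (⊤ : ℕ∞) etaInv {p : (Fin m → ℂ) × ℂ | p.2 ≠ 0} :=
  ⟨invOn_etaInv_eta.bijOn (fun _ hz => eta_snd_ne_zero hz) (fun _ hp => etaInv_last_ne_zero hp),
    invOn_etaInv_eta, fun p _ => cnorm_etaInv p, contDiffOn_eta, contDiff_etaInv.contDiffOn⟩

/-- **Section 4.1: generalized polar coordinates.** `η` is a bijection from
`{z ∈ ℂⁿ : zⁿ ≠ 0}` onto `ℂ^{n−1} × (ℂ∖{0})` with inverse `η⁻¹` as above; moreover
`‖η⁻¹(w,ζ)‖ = |ζ|`, and both `η` and `η⁻¹` are `C^∞` in the real sense on their open domains,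
so `η` is a real diffeomorphism. Here `n = m + 1 ≥ 2`. -/
theorem statement8 (m : ℕ) (hm : 1 ≤ m) :
    Set.BijOn eta {z : Fin (m + 1) → ℂ | z (Fin.last m) ≠ 0}
      {p : (Fin m → ℂ) × ℂ | p.2 ≠ 0}
    ∧ Set.InvOn etaInv eta {z : Fin (m + 1) → ℂ | z (Fin.last m) ≠ 0}
      {p : (Fin m → ℂ) × ℂ | p.2 ≠ 0}
    ∧ (∀ p : (Fin m → ℂ) × ℂ, p.2 ≠ 0 → cnorm (etaInv p) = ‖p.2‖)
    ∧ ContDiffOn ℝ (⊤ : ℕ∞) eta {z : Fin (m + 1) → ℂ | z (Fin.last m) ≠ 0}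
    ∧ ContDiffOn ℝ (⊤ : ℕ∞) etaInv {p : (Fin m → ℂ) × ℂ | p.2 ≠ 0} :=
  statement8_general m

end
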